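/- Let T be an abelian regular subgroup of Aff(V) with associated product x·y = x·δ(y) as in the correspondence, and let N be the group of translations t_x : z ↦ z + x. Then the commutator [t_x, τ(y)] equals the translation t_{x·y}, for all x, y ∈ V. -/
import Mathlib

theorem stmt {F V : Type*} [Field F] [AddCommGroup V] [Module F V]
    (T : Subgroup (V ≃ᵃ[F] V))
    (hcomm : ∀ g ∈ T, ∀ h ∈ T, g * h = h * g)
    (hreg : ∀ v : V, ∃! g : V ≃ᵃ[F] V, g ∈ T ∧ g 0 = v)
    (τ : V → (V ≃ᵃ[F] V)) (hτT : ∀ x, τ x ∈ T) (hτ0 : ∀ x, τ x 0 = x)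
    (δ : V → Module.End F V)
    (hδ : ∀ x z, τ x z = z + δ x z + x)
    (t : V → (V ≃ᵃ[F] V)) (ht : ∀ x z, t x z = z + x) :
    ∀ x y : V, τ y * t x * (τ y)⁻¹ * (t x)⁻¹ = t (δ y x) := by
  intro x y
  have key : τ y * t x = t (δ y x) * (t x * τ y) := by
    ext z
    show τ y (t x z) = t (δ y x) (t x (τ y z))
    rw [ht, hδ, ht, hδ, ht, map_add]
    abel
  rw [key]
  group
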